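/- arXiv:math/0612021 — 3 statements merged into one kernel-verified Lean document; each statement's English description precedes it below -/
import Mathlib

section
/- Let G be a Laman graph on n ≥ 3 vertices and let e = uv be any edge of G. Then there exists a vertex w ∉ {u, v} with degree 2 or 3 in G. -/
/-- A Laman graph: a finite simple graph with exactly `2n - 3` edges such that
every set of `k ≥ 2` vertices induces at most `2k - 3` edges. -/
def IsLaman {V : Type*} [Fintype V] [DecidableEq V]
    (G : SimpleGraph V) [DecidableRel G.Adj] : Prop :=
  G.edgeFinset.card = 2 * Fintype.card V - 3 ∧
  ∀ W : Finset V, 2 ≤ W.card →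
    (G.edgeFinset.filter fun e => ∀ v ∈ e, v ∈ W).card ≤ 2 * W.card - 3

lemma laman_min_degree {V : Type*} [Fintype V] [DecidableEq V]
    (G : SimpleGraph V) [DecidableRel G.Adj]
    (hL : IsLaman G) (hn : 3 ≤ Fintype.card V) (w : V) :
    2 ≤ G.degree w := by
  set n := Fintype.card V with hn'
  have hcard : (Finset.univ.erase w).card = n - 1 := by
    simp [Finset.card_erase_of_mem, hn']
  have h2 : 2 ≤ (Finset.univ.erase w).card := by omega
  have hbound := hL.2 (Finset.univ.erase w) h2
  have hkey : (G.edgeFinset.filter fun e => ∀ x ∈ e, x ∈ Finset.univ.erase w)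
      = G.edgeFinset \ G.incidenceFinset w := by
    ext e
    simp only [Finset.mem_filter, Finset.mem_sdiff, SimpleGraph.mem_incidenceFinset,
      SimpleGraph.incidenceSet, Set.mem_setOf_eq, SimpleGraph.mem_edgeFinset,
      Finset.mem_erase, Finset.mem_univ, and_true]
    constructor
    · rintro ⟨he, hall⟩
      exact ⟨he, fun ⟨_, hw⟩ => (hall w hw) rfl⟩
    · rintro ⟨he, hnot⟩
      exact ⟨he, fun x hx hxw => hnot ⟨he, hxw ▸ hx⟩⟩
  rw [hkey, Finset.card_sdiff_of_subset (by
      rw [G.incidenceFinset_eq_filter w]; exact Finset.filter_subset _ _),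
    G.card_incidenceFinset_eq_degree w, hL.1, hcard] at hbound
  have hdle : G.degree w < n := G.degree_lt_card_verts w
  omega

/-- In a Laman graph on `n ≥ 3` vertices, for any edge `uv`
there is a vertex `w ∉ {u, v}` of degree 2 or 3. -/
theorem laman_low_degree_vertex {V : Type*} [Fintype V] [DecidableEq V]
    (G : SimpleGraph V) [DecidableRel G.Adj]
    (hL : IsLaman G) (hn : 3 ≤ Fintype.card V)
    (u v : V) (huv : G.Adj u v) :
    ∃ w : V, w ≠ u ∧ w ≠ v ∧ (G.degree w = 2 ∨ G.degree w = 3) := by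
  by_contra hcon
  push_neg at hcon
  have hne : u ≠ v := G.ne_of_adj huv
  set n := Fintype.card V with hn'
  have hmin := laman_min_degree G hL hn
  have hbig : ∀ w : V, w ≠ u → w ≠ v → 4 ≤ G.degree w := by
    intro w hwu hwv
    have := hcon w hwu hwv
    have := hmin w
    omega
  set S : Finset V := Finset.univ \ {u, v} with hS
  have hScard : S.card = n - 2 := by
    rw [hS, Finset.card_sdiff_of_subset (by simp)]
    simp [Finset.card_pair hne, hn']
  have huS : u ∉ S := by simp [hS]
  have hvS : v ∉ insert u S := by simp [hS, hne.symm]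
  have huniv : (Finset.univ : Finset V) = insert v (insert u S) := by
    ext x
    by_cases hx : x = u <;> by_cases hx' : x = v <;> simp [hS, hx, hx']
  have hsum : ∑ x, G.degree x = 2 * G.edgeFinset.card :=
    G.sum_degrees_eq_twice_card_edges
  rw [huniv, Finset.sum_insert hvS, Finset.sum_insert huS, hL.1] at hsum
  have hSsum : 4 * S.card ≤ ∑ x ∈ S, G.degree x := by
    calc 4 * S.card = ∑ _x ∈ S, 4 := by rw [Finset.sum_const]; ring
    _ ≤ ∑ x ∈ S, G.degree x := by
        apply Finset.sum_le_sum
        intro x hx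
        simp [hS] at hx
        exact hbig x hx.1 hx.2
  have hu2 := hmin u
  have hv2 := hmin v
  rw [hScard] at hSsum
  omega
end

section
/- Let G be a Laman graph on n ≥ 3 vertices, let uv be an edge of G, and let G' be obtained from G by deleting the edge uv, adding a new vertex w, and adding the three edges wu, wv, wx for some vertex x ∉ {u, v} of G (a Henneberg II step). Then G' is a Laman graph on n + 1 vertices. -/
/-- Henneberg II step: delete the edge `uv`, add a new vertex (`none`) and
join it to `u`, `v` and a third vertex `x`. -/
def henneberg2 {V : Type*} [DecidableEq V] (G : SimpleGraph V) (u v x : V) :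
    SimpleGraph (Option V) where
  Adj a b := match a, b with
    | some a', some b' => G.Adj a' b' ∧ ¬ ((a' = u ∧ b' = v) ∨ (a' = v ∧ b' = u))
    | some a', none => a' = u ∨ a' = v ∨ a' = x
    | none, some b' => b' = u ∨ b' = v ∨ b' = x
    | none, none => False
  symm := by
    constructor
    rintro (_ | a) (_ | b) h <;> simp_all
    exact ⟨h.1.symm, fun h1 h2 => h.2.2 h2 h1, fun h1 h2 => h.2.1 h2 h1⟩
  loopless := by
    constructor
    rintro (_ | a) h <;> simp_all

instance {V : Type*} [DecidableEq V] (G : SimpleGraph V) [DecidableRel G.Adj] (u v x : V) :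
    DecidableRel (henneberg2 G u v x).Adj := fun a b =>
  match a, b with
  | some a', some b' =>
      inferInstanceAs (Decidable (G.Adj a' b' ∧ ¬ ((a' = u ∧ b' = v) ∨ (a' = v ∧ b' = u))))
  | some a', none => inferInstanceAs (Decidable (a' = u ∨ a' = v ∨ a' = x))
  | none, some b' => inferInstanceAs (Decidable (b' = u ∨ b' = v ∨ b' = x))
  | none, none => inferInstanceAs (Decidable False)

section HennebergAux

variable {V : Type*} [Fintype V] [DecidableEq V]
  (G : SimpleGraph V) [DecidableRel G.Adj] (u v x : V)

lemma henneberg2_filter_eq (W : Finset (Option V)) :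
    ((henneberg2 G u v x).edgeFinset.filter fun e => ∀ a ∈ e, a ∈ W) =
    ((G.edgeFinset.filter fun e => ∀ y ∈ e, some y ∈ W).erase s(u,v)).image (Sym2.map some)
      ∪ (if (none : Option V) ∈ W then
          (({u,v,x} : Finset V).filter (fun y => some y ∈ W)).image
            (fun y => s((none : Option V), some y)) else ∅) := by
  ext e
  induction e using Sym2.ind with
  | _ a b =>
    cases a <;> cases b <;>
      simp only [SimpleGraph.mem_edgeFinset, SimpleGraph.mem_edgeSet, Sym2.eq_iff,
        Finset.mem_image, Finset.mem_union, Finset.mem_filter, Finset.mem_erase,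
        Sym2.mem_iff, Finset.mem_insert, Finset.mem_singleton] <;>
      simp only [henneberg2]
    · -- none none
      simp only [false_and, false_iff]
      rintro (⟨e, -, he⟩ | hmem)
      · induction e using Sym2.ind with
        | _ c d => simp [Sym2.eq_iff] at he
      · split_ifs at hmem with h
        · obtain ⟨y, -, hye⟩ := Finset.mem_image.1 hmem
          simp [Sym2.eq_iff] at hye
        · simp at hmem
    · -- none some
      rename_i b
      constructor
      · rintro ⟨hb, hW⟩
        right
        rw [if_pos (hW _ (Or.inl rfl))]
        exact Finset.mem_image.2 ⟨b, Finset.mem_filter.2 ⟨by simpa using hb,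
          hW _ (Or.inr rfl)⟩, rfl⟩
      · rintro (⟨e, -, he⟩ | hmem)
        · induction e using Sym2.ind with
          | _ c d => simp [Sym2.eq_iff] at he
        · split_ifs at hmem with h
          · obtain ⟨y, hy, hye⟩ := Finset.mem_image.1 hmem
            obtain ⟨hy1, hy2⟩ := Finset.mem_filter.1 hy
            have hyb : y = b := by simpa [Sym2.eq_iff] using hye
            subst hyb
            exact ⟨by simpa using hy1, by rintro a (rfl | rfl) <;> assumption⟩
          · simp at hmem
    · -- some none
      rename_i b
      constructor
      · rintro ⟨hb, hW⟩
        right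
        rw [if_pos (hW _ (Or.inr rfl))]
        refine Finset.mem_image.2 ⟨b, Finset.mem_filter.2 ⟨by simpa using hb,
          hW _ (Or.inl rfl)⟩, ?_⟩
        rw [Sym2.eq_swap]
      · rintro (⟨e, -, he⟩ | hmem)
        · induction e using Sym2.ind with
          | _ c d => simp [Sym2.eq_iff] at he
        · split_ifs at hmem with h
          · obtain ⟨y, hy, hye⟩ := Finset.mem_image.1 hmem
            obtain ⟨hy1, hy2⟩ := Finset.mem_filter.1 hy
            have hyb : y = b := by simpa [Sym2.eq_iff] using hye
            subst hyb
            exact ⟨by simpa using hy1, by rintro a (rfl | rfl) <;> assumption⟩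
          · simp at hmem
    · -- some some
      rename_i a b
      constructor
      · rintro ⟨⟨hadj, hne⟩, hW⟩
        left
        refine ⟨s(a, b), ⟨?_, hadj, ?_⟩, by rw [Sym2.map_pair_eq]⟩
        · simp only [Ne, Sym2.eq_iff]; tauto
        · intro y hy
          rcases Sym2.mem_iff.1 hy with rfl | rfl
          · exact hW _ (Or.inl rfl)
          · exact hW _ (Or.inr rfl)
      · rintro (⟨e, ⟨hne, hadj, hWe⟩, he⟩ | hmem)
        · induction e using Sym2.ind with
          | _ c d =>
            rw [SimpleGraph.mem_edgeSet] at hadj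
            rw [Ne, Sym2.eq_iff] at hne
            simp only [Sym2.map_pair_eq, Sym2.eq_iff, Option.some.injEq] at he
            rcases he with ⟨rfl, rfl⟩ | ⟨rfl, rfl⟩
            · refine ⟨⟨hadj, by tauto⟩, ?_⟩
              rintro a' (rfl | rfl)
              · exact hWe _ (Sym2.mem_mk_left _ _)
              · exact hWe _ (Sym2.mem_mk_right _ _)
            · refine ⟨⟨hadj.symm, by tauto⟩, ?_⟩
              rintro a' (rfl | rfl)
              · exact hWe _ (Sym2.mem_mk_right _ _)
              · exact hWe _ (Sym2.mem_mk_left _ _)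
        · split_ifs at hmem with h
          · obtain ⟨y, -, hye⟩ := Finset.mem_image.1 hmem
            simp [Sym2.eq_iff] at hye
          · simp at hmem

lemma henneberg2_filter_card (W : Finset (Option V)) :
    ((henneberg2 G u v x).edgeFinset.filter fun e => ∀ a ∈ e, a ∈ W).card =
    ((G.edgeFinset.filter fun e => ∀ y ∈ e, some y ∈ W).erase s(u,v)).card +
      (if (none : Option V) ∈ W then
        (({u,v,x} : Finset V).filter (fun y => some y ∈ W)).card else 0) := by
  rw [henneberg2_filter_eq]
  have hdisj : Disjoint
      (((G.edgeFinset.filter fun e => ∀ y ∈ e, some y ∈ W).erase s(u,v)).image (Sym2.map some))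
      (if (none : Option V) ∈ W then
        (({u,v,x} : Finset V).filter (fun y => some y ∈ W)).image
          (fun y => s((none : Option V), some y)) else ∅) := by
    split_ifs
    · rw [Finset.disjoint_left]
      intro e he1 he2
      obtain ⟨e1, -, he1⟩ := Finset.mem_image.1 he1
      obtain ⟨y, -, hy⟩ := Finset.mem_image.1 he2
      induction e1 using Sym2.ind with
      | _ c d =>
        rw [← hy, Sym2.map_pair_eq] at he1
        simp [Sym2.eq_iff] at he1
    · exact Finset.disjoint_empty_right _
  rw [Finset.card_union_of_disjoint hdisj]
  congr 1
  · exact Finset.card_image_of_injective _ (Sym2.map.injective (Option.some_injective V))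
  · split_ifs
    · exact Finset.card_image_of_injective _ (fun y z h => by simpa [Sym2.eq_iff] using h)
    · simp

end HennebergAux

/-- A Henneberg II step (subdivide an edge `uv` of a Laman graph
on `n ≥ 3` vertices by a new vertex `w` and connect `w` to a third vertex
`x ∉ {u, v}`) yields a Laman graph on `n + 1` vertices. -/
theorem henneberg2_laman {V : Type*} [Fintype V] [DecidableEq V]
    (G : SimpleGraph V) [DecidableRel G.Adj]
    (hL : IsLaman G) (hn : 3 ≤ Fintype.card V)
    (u v x : V) (huv : G.Adj u v) (hxu : x ≠ u) (hxv : x ≠ v) :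
    IsLaman (henneberg2 G u v x) ∧ Fintype.card (Option V) = Fintype.card V + 1 := by
  have huvne : u ≠ v := huv.ne
  have huvmem : s(u,v) ∈ G.edgeFinset := SimpleGraph.mem_edgeFinset.2 huv
  have hcard3 : ({u, v, x} : Finset V).card = 3 := by
    rw [Finset.card_insert_of_notMem (by simp [huvne, Ne.symm hxu]),
      Finset.card_insert_of_notMem (by simp [Ne.symm hxv]), Finset.card_singleton]
  refine ⟨⟨?_, ?_⟩, by simp⟩
  · -- edge count
    have h := henneberg2_filter_card G u v x Finset.univ
    rw [Finset.filter_true_of_mem (fun _ _ => by simp),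
      Finset.filter_true_of_mem (fun _ _ => by simp),
      if_pos (Finset.mem_univ _),
      Finset.filter_true_of_mem (fun _ _ => by simp)] at h
    rw [h, Finset.card_erase_of_mem huvmem, hcard3, Fintype.card_option, hL.1]
    omega
  · -- sparsity
    intro W hW
    have h := henneberg2_filter_card G u v x W
    set W' : Finset V := W.preimage some (Option.some_injective V).injOn with hW'def
    have hmemW' : ∀ y : V, y ∈ W' ↔ some y ∈ W := fun y => Finset.mem_preimage
    have hfc : (G.edgeFinset.filter fun e => ∀ y ∈ e, some y ∈ W) =
        (G.edgeFinset.filter fun e => ∀ y ∈ e, y ∈ W') := by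
      apply Finset.filter_congr
      intro e _
      constructor <;> intro h' y hy
      · exact (hmemW' y).2 (h' y hy)
      · exact (hmemW' y).1 (h' y hy)
    rw [hfc] at h
    set S := G.edgeFinset.filter fun e => ∀ y ∈ e, y ∈ W' with hSdef
    set T := ({u,v,x} : Finset V).filter (fun y => some y ∈ W) with hTdef
    -- card of W in terms of W'
    have himg : W'.image some = W.erase none := by
      ext o
      cases o <;> simp [hmemW']
    have hk : W'.card = (W.erase none).card := by
      rw [← himg, Finset.card_image_of_injective _ (Option.some_injective V)]
    -- T ⊆ W'
    have hTW' : T ⊆ W' := fun y hy => (hmemW' y).2 (Finset.mem_filter.1 hy).2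
    have hT3 : T.card ≤ 3 := hcard3 ▸ Finset.card_le_card (Finset.filter_subset _ _)
    have hTk : T.card ≤ W'.card := Finset.card_le_card hTW'
    -- S empty if W' small
    have hS0 : W'.card ≤ 1 → S.card = 0 := by
      intro h1
      rw [Finset.card_eq_zero, Finset.eq_empty_iff_forall_notMem]
      intro e he
      induction e using Sym2.ind with
      | _ a b =>
        obtain ⟨he1, he2⟩ := Finset.mem_filter.1 he
        have hab : a ≠ b := (SimpleGraph.mem_edgeFinset.1 he1).ne
        have hsub : ({a, b} : Finset V) ⊆ W' := by
          intro z hz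
          rcases Finset.mem_insert.1 hz with rfl | hz
          · exact he2 _ (Sym2.mem_mk_left _ _)
          · rw [Finset.mem_singleton.1 hz]
            exact he2 _ (Sym2.mem_mk_right _ _)
        have hle := Finset.card_le_card hsub
        rw [Finset.card_insert_of_notMem (by simp [hab]), Finset.card_singleton] at hle
        omega
    have hSb : 2 ≤ W'.card → S.card ≤ 2 * W'.card - 3 := fun h2 => hL.2 W' h2
    have hEle : (S.erase s(u,v)).card ≤ S.card := Finset.card_le_card (Finset.erase_subset _ _)
    -- case t = 3
    have hE3 : T.card = 3 → (S.erase s(u,v)).card = S.card - 1 ∧ 1 ≤ S.card := by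
      intro ht
      have hTeq : T = {u, v, x} :=
        Finset.eq_of_subset_of_card_le (Finset.filter_subset _ _) (by omega)
      have hu' : u ∈ W' := hTW' (hTeq ▸ (by simp : u ∈ ({u,v,x} : Finset V)))
      have hv' : v ∈ W' := hTW' (hTeq ▸ (by simp : v ∈ ({u,v,x} : Finset V)))
      have huvS : s(u,v) ∈ S := by
        refine Finset.mem_filter.2 ⟨huvmem, ?_⟩
        intro y hy
        rcases Sym2.mem_iff.1 hy with rfl | rfl
        · exact hu'
        · exact hv'
      exact ⟨Finset.card_erase_of_mem huvS, Finset.card_pos.2 ⟨_, huvS⟩⟩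
    by_cases hnone : (none : Option V) ∈ W
    · rw [if_pos hnone] at h
      have hWcard : W.card = W'.card + 1 := by
        rw [hk, Finset.card_erase_of_mem hnone]
        have : 1 ≤ W.card := Finset.card_pos.2 ⟨_, hnone⟩
        omega
      by_cases hk2 : 2 ≤ W'.card
      · have h1 := hSb hk2
        by_cases ht3 : T.card = 3
        · obtain ⟨h2, h3⟩ := hE3 ht3
          omega
        · omega
      · have h1 := hS0 (by omega)
        omega
    · rw [if_neg hnone] at h
      have hWcard : W.card = W'.card := by
        rw [hk, Finset.erase_eq_of_notMem hnone]
      have h1 := hSb (by omega)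
      omega
end

section
/- Let n ≥ 1. The number of trees on the linearly ordered vertex set {1, …, n+1} that are simultaneously non-crossing (there are no edges {i,k} and {j,l} with i < j < k < l) and alternating (no vertex has both a smaller and a larger neighbor) equals the n-th Catalan number C_n = (1/(n+1))·binom(2n, n). -/
open SimpleGraph

section Generic
variable {V W : Type*} {G : SimpleGraph V} {H : SimpleGraph W}

lemma reachable_of_walk (f : V → W)
    (hf : ∀ x y, G.Adj x y → H.Adj (f x) (f y) ∨ f x = f y) :
    ∀ {p q : V}, G.Walk p q → H.Reachable (f p) (f q) := by
  intro p q w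
  induction w with
  | nil => exact Reachable.refl _
  | cons h w ih =>
    rcases hf _ _ h with h' | h'
    · exact h'.reachable.trans ih
    · exact h' ▸ ih

variable [LinearOrder V]

lemma exists_spanning_edge {t : V} :
    ∀ {p q : V} (w : G.Walk p q), t ∉ w.support → p < t → t < q →
      ∃ x ∈ w.support, ∃ y ∈ w.support, G.Adj x y ∧ x < t ∧ t < y := by
  intro p q w
  induction w with
  | nil => intro _ h1 h2; exact absurd (h1.trans h2) (lt_irrefl _)
  | @cons p r q h w ih =>
    intro hsup hp hq
    have hsup' : t ∉ w.support := fun hc => hsup (List.mem_cons_of_mem _ hc)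
    have hr : r ≠ t := fun e => hsup' (e ▸ w.start_mem_support)
    rcases lt_or_gt_of_ne hr with h1 | h1
    · obtain ⟨x, hx, y, hy, h3⟩ := ih hsup' h1 hq
      exact ⟨x, List.mem_cons_of_mem _ hx, y, List.mem_cons_of_mem _ hy, h3⟩
    · exact ⟨p, by simp [Walk.support_cons],
        r, List.mem_cons_of_mem _ w.start_mem_support, h, hp, h1⟩

lemma isAcyclic_comap {V W : Type*} {G : SimpleGraph W} (hG : G.IsAcyclic)
    (f : V → W) (hf : Function.Injective f) : (G.comap f).IsAcyclic := by
  rw [isAcyclic_iff_forall_adj_isBridge]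
  intro u v huv
  rw [isBridge_iff]
  refine fun hreach => ?_
  obtain ⟨w⟩ := hreach
  refine (isBridge_iff.mp (isAcyclic_iff_forall_adj_isBridge.mp hG
    (show G.Adj (f u) (f v) from huv))) ?_
  refine reachable_of_walk f (fun a b hab => Or.inl ?_) w
  unfold deleteEdges at hab ⊢
  rw [sdiff_adj, fromEdgeSet_adj] at hab ⊢
  obtain ⟨h1, h2⟩ := hab
  refine ⟨h1, fun hc => h2 ⟨?_, fun he => hc.2 (congrArg f he)⟩⟩
  have hc1 := hc.1
  simp only [Set.mem_singleton_iff, Sym2.eq_iff] at hc1 ⊢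
  rcases hc1 with ⟨e1, e2⟩ | ⟨e1, e2⟩
  · exact Or.inl ⟨hf e1, hf e2⟩
  · exact Or.inr ⟨hf e1, hf e2⟩

lemma walk_prop_iff {V : Type*} {G : SimpleGraph V} (P : V → Prop)
    (hP : ∀ x y, G.Adj x y → (P x ↔ P y)) :
    ∀ {p q : V}, G.Walk p q → (P p ↔ P q) := by
  intro p q w
  induction w with
  | nil => exact Iff.rfl
  | cons h w ih => exact (hP _ _ h).trans ih

end Generic

namespace NCAT

def NC {m : ℕ} (T : SimpleGraph (Fin m)) : Prop :=
  ¬ ∃ i j k l : Fin m, i < j ∧ j < k ∧ k < l ∧ T.Adj i k ∧ T.Adj j l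

def Alt {m : ℕ} (T : SimpleGraph (Fin m)) : Prop :=
  ∀ j : Fin m, (∀ i, T.Adj j i → i < j) ∨ (∀ i, T.Adj j i → j < i)

variable {m : ℕ} {T : SimpleGraph (Fin m)}

lemma nc_elim (hnc : NC T) {i j k l : Fin m} (h1 : i < j) (h2 : j < k) (h3 : k < l)
    (ha : T.Adj i k) (hb : T.Adj j l) : False :=
  hnc ⟨i, j, k, l, h1, h2, h3, ha, hb⟩

section Struct

def zv (hm : 2 ≤ m) : Fin m := ⟨0, by omega⟩
def lv (hm : 2 ≤ m) : Fin m := ⟨m - 1, by omega⟩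

lemma adj_path_aux (hm : 2 ≤ m) (hnc : NC T) (halt : Alt T) :
    ∀ {a b : Fin m} (w : T.Walk a b), w.IsPath → a = zv hm → b = lv hm → T.Adj a b := by
  intro a b w
  cases w with
  | nil =>
    intro _ ha hb
    exfalso; rw [ha] at hb; simp only [zv, lv, Fin.ext_iff] at hb; omega
  | @cons _ v1 _ h w' =>
    cases w' with
    | nil => intro _ _ _; exact h
    | @cons _ v2 _ h2 w'' =>
      intro hw ha hb
      subst ha; subst hb
      exfalso
      simp only [Walk.isPath_def, Walk.support_cons, List.nodup_cons] at hw
      obtain ⟨hz, hv1, hnd⟩ := hw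
      have hzw : zv hm ∉ w''.support := fun hc => hz (by simp [hc])
      have hzv1 : zv hm ≠ v1 := fun hc => hz (by simp [hc])
      have hv1w : v1 ∉ w''.support := hv1
      have hlt1 : zv hm < v1 := by
        have := hzv1; rw [Fin.lt_def]; simp [zv, Fin.ext_iff] at this ⊢; omega
      have hall : ∀ i, T.Adj v1 i → i < v1 := by
        rcases halt v1 with hc | hc
        · exact hc
        · exact absurd (hc _ h.symm) (by exact fun hlt => absurd (hlt.trans hlt1) (lt_irrefl _))
      have hv2lt : v2 < v1 := hall _ h2
      have hv1l : v1 < lv hm := by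
        have hne : v1 ≠ lv hm := fun hc => hv1w (hc ▸ w''.end_mem_support)
        rw [Fin.lt_def]; simp [lv, Fin.ext_iff] at hne ⊢
        omega
      obtain ⟨x, hxs, y, hys, hadj, hx1, hx2⟩ :=
        exists_spanning_edge w'' hv1w hv2lt hv1l
      have hzx : zv hm < x := by
        have hne : zv hm ≠ x := fun hc => hzw (hc ▸ hxs)
        rw [Fin.lt_def]; simp [zv, Fin.ext_iff] at hne ⊢; omega
      exact nc_elim hnc hzx hx1 hx2 h hadj

lemma adj_zero_last (hm : 2 ≤ m) (htree : T.IsTree) (hnc : NC T) (halt : Alt T) :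
    T.Adj (zv hm) (lv hm) := by
  obtain ⟨w0⟩ := htree.isConnected.preconnected (zv hm) (lv hm)
  obtain ⟨w, hw⟩ := w0.toPath
  exact adj_path_aux hm hnc halt w hw rfl rfl


def delE (hm : 2 ≤ m) (T : SimpleGraph (Fin m)) : SimpleGraph (Fin m) :=
  T \ fromEdgeSet {s(zv hm, lv hm)}

lemma delE_adj {hm : 2 ≤ m} {x y : Fin m} :
    (delE hm T).Adj x y ↔ T.Adj x y ∧ s(x, y) ≠ s(zv hm, lv hm) := by
  simp only [delE, sdiff_adj, fromEdgeSet_adj, Set.mem_singleton_iff]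
  constructor
  · rintro ⟨h1, h2⟩; exact ⟨h1, fun hc => h2 ⟨hc, h1.ne⟩⟩
  · rintro ⟨h1, h2⟩; exact ⟨h1, fun hc => h2 hc.1⟩

lemma reach_aux (hm : 2 ≤ m) : ∀ {p q : Fin m} (_ : T.Walk p q),
    ((delE hm T).Reachable q (zv hm) ∨ (delE hm T).Reachable q (lv hm)) →
    ((delE hm T).Reachable p (zv hm) ∨ (delE hm T).Reachable p (lv hm)) := by
  intro p q w
  induction w with
  | nil => exact id
  | @cons p r q h w ih =>
    intro hq
    by_cases he : s(p, r) = s(zv hm, lv hm)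
    · rw [Sym2.eq_iff] at he
      rcases he with ⟨h1, _⟩ | ⟨h1, _⟩
      · exact Or.inl (h1 ▸ Reachable.refl _)
      · exact Or.inr (h1 ▸ Reachable.refl _)
    · have hpr : (delE hm T).Adj p r := delE_adj.mpr ⟨h, he⟩
      rcases ih hq with h1 | h1
      · exact Or.inl (hpr.reachable.trans h1)
      · exact Or.inr (hpr.reachable.trans h1)

lemma reach_dichotomy (hm : 2 ≤ m) (hconn : T.Connected) (x : Fin m) :
    (delE hm T).Reachable (zv hm) x ∨ (delE hm T).Reachable (lv hm) x := by
  obtain ⟨w⟩ := hconn.preconnected x (zv hm)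
  rcases reach_aux hm w (Or.inl (Reachable.refl _)) with h | h
  · exact Or.inl h.symm
  · exact Or.inr h.symm

lemma not_reach_zl (hm : 2 ≤ m) (htree : T.IsTree) (hnc : NC T) (halt : Alt T) :
    ¬ (delE hm T).Reachable (zv hm) (lv hm) :=
  (isBridge_iff.mp (isAcyclic_iff_forall_adj_isBridge.mp htree.IsAcyclic
    (adj_zero_last hm htree hnc halt)))

lemma side_disj (hm : 2 ≤ m) (htree : T.IsTree) (hnc : NC T) (halt : Alt T) {x : Fin m}
    (h1 : (delE hm T).Reachable (zv hm) x) (h2 : (delE hm T).Reachable (lv hm) x) : False :=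
  not_reach_zl hm htree hnc halt (h1.trans h2.symm)

lemma no_inversion (hm : 2 ≤ m) (htree : T.IsTree) (hnc : NC T) (halt : Alt T) :
    ∀ (d : ℕ) (a b : Fin m), m - b.val ≤ d → (delE hm T).Reachable (zv hm) a →
      (delE hm T).Reachable (lv hm) b → b < a → False := by
  intro d
  induction d with
  | zero => intro a b hd _ _ _; have := b.isLt; omega
  | succ d ih =>
    intro a b hd hra hrb hba
    obtain ⟨W1⟩ := hra
    obtain ⟨W2'⟩ := hrb
    have hsup1 : ∀ x ∈ W1.support, (delE hm T).Reachable (zv hm) x :=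
      fun x hx => ⟨W1.takeUntil x hx⟩
    have hsup2 : ∀ x ∈ W2'.reverse.support, (delE hm T).Reachable (lv hm) x := by
      intro x hx
      exact (Reachable.symm ⟨W2'.reverse.dropUntil x hx⟩)
    have haW2 : a ∉ W2'.reverse.support :=
      fun hx => side_disj hm htree hnc halt ⟨W1⟩ (hsup2 a hx)
    have halast : a < lv hm := by
      have hne : a ≠ lv hm := fun hc =>
        side_disj hm htree hnc halt (hc ▸ ⟨W1⟩) (Reachable.refl _)
      have h1 : a.val ≠ m - 1 := fun hc => hne (Fin.ext (by simp [lv, hc]))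
      have := a.isLt
      rw [Fin.lt_def]; simp only [lv]; omega
    obtain ⟨x, hxs, y, hys, hadj, hxa, hay⟩ :=
      exists_spanning_edge W2'.reverse haW2 hba halast
    have hx0 : zv hm < x := by
      have hne : zv hm ≠ x := fun hc =>
        side_disj hm htree hnc halt (Reachable.refl _) (hc ▸ hsup2 x hxs)
      have h1 : x.val ≠ 0 := fun hc => hne (Fin.ext (by simp [zv, hc]))
      rw [Fin.lt_def]; simp only [zv]; omega
    have hxW1 : x ∉ W1.support :=
      fun hx => side_disj hm htree hnc halt (hsup1 x hx) (hsup2 x hxs)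
    obtain ⟨u, hus, v, hvs, hadj2, hux, hxv⟩ := exists_spanning_edge W1 hxW1 hx0 hxa
    have hvy : v ≠ y := fun hc =>
      side_disj hm htree hnc halt (hsup1 v hvs) (hc ▸ hsup2 y hys)
    have hTxy : T.Adj x y := (delE_adj.mp hadj).1
    have hTuv : T.Adj u v := (delE_adj.mp hadj2).1
    rcases lt_or_gt_of_ne hvy with h | h
    · exact nc_elim hnc hux hxv h hTuv hTxy
    · refine ih v y ?_ (hsup1 v hvs) (hsup2 y hys) h
      rw [Fin.lt_def] at hba hxa hay
      omega

noncomputable def kfin (hm : 2 ≤ m) (T : SimpleGraph (Fin m)) : ℕ :=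
  Nat.card {x : Fin m // (delE hm T).Reachable (zv hm) x}

lemma reach_iff_lt_kfin (hm : 2 ≤ m) (htree : T.IsTree) (hnc : NC T) (halt : Alt T)
    (x : Fin m) : (delE hm T).Reachable (zv hm) x ↔ x.val < kfin hm T := by
  classical
  set p : Fin m → Prop := fun x => (delE hm T).Reachable (zv hm) x with hp
  have hk : kfin hm T = (Finset.univ.filter p).card := by
    rw [kfin, Nat.card_eq_fintype_card, Fintype.card_subtype]
  have hdc : ∀ x y : Fin m, y ≤ x → p x → p y := by
    intro x y hyx hpx
    by_contra hpy
    have hry : (delE hm T).Reachable (lv hm) y := by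
      rcases reach_dichotomy hm htree.isConnected y with h | h
      · exact absurd h hpy
      · exact h
    rcases eq_or_lt_of_le hyx with h | h
    · exact hpy (h ▸ hpx)
    · exact no_inversion hm htree hnc halt m x y (by omega) hpx hry h
  constructor
  · intro hpx
    have hsub : Finset.Iic x ⊆ Finset.univ.filter p := by
      intro y hy
      rw [Finset.mem_Iic] at hy
      exact Finset.mem_filter.mpr ⟨Finset.mem_univ _, hdc x y hy hpx⟩
    have := Finset.card_le_card hsub
    rw [Fin.card_Iic] at this
    omega
  · intro hlt
    by_contra hpx
    have hsub : Finset.univ.filter p ⊆ Finset.Iio x := by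
      intro y hy
      rw [Finset.mem_filter] at hy
      rw [Finset.mem_Iio]
      rcases lt_or_ge y x with h | h
      · exact h
      · exact absurd (hdc y x h hy.2) hpx
    have := Finset.card_le_card hsub
    rw [Fin.card_Iio] at this
    omega

lemma one_le_kfin (hm : 2 ≤ m) (htree : T.IsTree) (hnc : NC T) (halt : Alt T) :
    1 ≤ kfin hm T := by
  have := (reach_iff_lt_kfin hm htree hnc halt (zv hm)).mp (Reachable.refl _)
  simp [zv] at this; omega

lemma kfin_le (hm : 2 ≤ m) (htree : T.IsTree) (hnc : NC T) (halt : Alt T) :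
    kfin hm T ≤ m - 1 := by
  have h1 : ¬ (delE hm T).Reachable (zv hm) (lv hm) := not_reach_zl hm htree hnc halt
  have := (reach_iff_lt_kfin hm htree hnc halt (lv hm))
  simp only [lv] at this
  by_contra hc
  exact h1 ((reach_iff_lt_kfin hm htree hnc halt (lv hm)).mpr (by simp only [lv]; omega))

lemma edge_split (hm : 2 ≤ m) (htree : T.IsTree) (hnc : NC T) (halt : Alt T) {x y : Fin m}
    (h : T.Adj x y) :
    (x.val < kfin hm T ∧ y.val < kfin hm T) ∨
    (kfin hm T ≤ x.val ∧ kfin hm T ≤ y.val) ∨ s(x, y) = s(zv hm, lv hm) := by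
  by_cases he : s(x, y) = s(zv hm, lv hm)
  · exact Or.inr (Or.inr he)
  · have hxy : (delE hm T).Adj x y := delE_adj.mpr ⟨h, he⟩
    by_cases hx : (delE hm T).Reachable (zv hm) x
    · exact Or.inl ⟨(reach_iff_lt_kfin hm htree hnc halt x).mp hx,
        (reach_iff_lt_kfin hm htree hnc halt y).mp (hx.trans hxy.reachable)⟩
    · have hy : ¬ (delE hm T).Reachable (zv hm) y := fun hr => hx (hr.trans hxy.symm.reachable)
      exact Or.inr (Or.inl ⟨le_of_not_gt
        (fun hl => hx ((reach_iff_lt_kfin hm htree hnc halt x).mpr hl)),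
        le_of_not_gt (fun hl => hy ((reach_iff_lt_kfin hm htree hnc halt y).mpr hl))⟩)

end Struct

section Glue
variable {k m : ℕ}

def glue (hk1 : 1 ≤ k) (hk2 : k < m) (A : SimpleGraph (Fin k)) (B : SimpleGraph (Fin (m - k))) :
    SimpleGraph (Fin m) where
  Adj x y :=
    (∃ hx : x.val < k, ∃ hy : y.val < k, A.Adj ⟨x.val, hx⟩ ⟨y.val, hy⟩) ∨
    (∃ hx : k ≤ x.val, ∃ hy : k ≤ y.val,
      B.Adj ⟨x.val - k, by have := x.isLt; omega⟩ ⟨y.val - k, by have := y.isLt; omega⟩) ∨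
    (x.val = 0 ∧ y.val = m - 1) ∨ (x.val = m - 1 ∧ y.val = 0)
  symm := by
    constructor
    rintro x y (⟨hx, hy, h⟩ | ⟨hx, hy, h⟩ | ⟨h1, h2⟩ | ⟨h1, h2⟩)
    · exact Or.inl ⟨hy, hx, h.symm⟩
    · exact Or.inr (Or.inl ⟨hy, hx, h.symm⟩)
    · exact Or.inr (Or.inr (Or.inr ⟨h2, h1⟩))
    · exact Or.inr (Or.inr (Or.inl ⟨h2, h1⟩))
  loopless := by
    constructor
    rintro x (⟨hx, hy, h⟩ | ⟨hx, hy, h⟩ | ⟨h1, h2⟩ | ⟨h1, h2⟩)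
    · exact A.irrefl h
    · exact B.irrefl h
    · omega
    · omega

def splitA (hk2 : k < m) (T : SimpleGraph (Fin m)) : SimpleGraph (Fin k) :=
  T.comap (fun u => ⟨u.val, by have := u.isLt; omega⟩)

def splitB (hk2 : k < m) (T : SimpleGraph (Fin m)) : SimpleGraph (Fin (m - k)) :=
  T.comap (fun u => ⟨k + u.val, by have := u.isLt; omega⟩)

lemma splitA_adj (hk2 : k < m) (T : SimpleGraph (Fin m)) (u v : Fin k) :
    (splitA hk2 T).Adj u v ↔
      T.Adj ⟨u.val, by have := u.isLt; omega⟩ ⟨v.val, by have := v.isLt; omega⟩ := Iff.rfl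

lemma splitB_adj (hk2 : k < m) (T : SimpleGraph (Fin m)) (u v : Fin (m - k)) :
    (splitB hk2 T).Adj u v ↔
      T.Adj ⟨k + u.val, by have := u.isLt; omega⟩ ⟨k + v.val, by have := v.isLt; omega⟩ :=
  Iff.rfl

lemma splitA_glue (hk1 : 1 ≤ k) (hk2 : k < m) (A : SimpleGraph (Fin k))
    (B : SimpleGraph (Fin (m - k))) : splitA hk2 (glue hk1 hk2 A B) = A := by
  ext u v
  rw [splitA_adj]
  constructor
  · rintro (⟨hx, hy, h⟩ | ⟨hx, hy, h⟩ | ⟨h1, h2⟩ | ⟨h1, h2⟩)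
    · simpa using h
    · exact absurd (show k ≤ u.val from hx) (by have := u.isLt; omega)
    · exact absurd (show v.val = m - 1 from h2) (by have := v.isLt; omega)
    · exact absurd (show u.val = m - 1 from h1) (by have := u.isLt; omega)
  · intro h
    exact Or.inl ⟨u.isLt, v.isLt, by simpa using h⟩

lemma splitB_glue (hk1 : 1 ≤ k) (hk2 : k < m) (A : SimpleGraph (Fin k))
    (B : SimpleGraph (Fin (m - k))) : splitB hk2 (glue hk1 hk2 A B) = B := by
  ext u v
  rw [splitB_adj]
  constructor
  · rintro (⟨hx, hy, h⟩ | ⟨hx, hy, h⟩ | ⟨h1, h2⟩ | ⟨h1, h2⟩)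
    · exact absurd (show k + u.val < k from hx) (by omega)
    · convert h using 2 <;> simp only [Fin.val_mk] <;> omega
    · exact absurd (show k + u.val = 0 from h1) (by omega)
    · exact absurd (show k + v.val = 0 from h2) (by omega)
  · intro h
    refine Or.inr (Or.inl ⟨by show k ≤ k + u.val; omega, by show k ≤ k + v.val; omega, ?_⟩)
    convert h using 2 <;> simp only [Fin.val_mk] <;> omega


lemma bridge_transfer {V V' : Type*} {G : SimpleGraph V} {G' : SimpleGraph V'}
    {x y : V} {x' y' : V'} (π : V → V') (hπx : π x = x') (hπy : π y = y')
    (hmap : ∀ a b, G.Adj a b → s(a, b) ≠ s(x, y) →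
      (G'.Adj (π a) (π b) ∧ s(π a, π b) ≠ s(x', y')) ∨ π a = π b)
    (hbridge : ¬ (G' \ fromEdgeSet {s(x', y')}).Reachable x' y') :
    ¬ (G \ fromEdgeSet {s(x, y)}).Reachable x y := by
  subst hπx
  subst hπy
  rintro ⟨w⟩
  apply hbridge
  refine reachable_of_walk π (fun a b hab => ?_) w
  rw [sdiff_adj, fromEdgeSet_adj] at hab
  obtain ⟨h1, h2⟩ := hab
  have hne : s(a, b) ≠ s(x, y) := fun hc => h2 ⟨by simp [hc], h1.ne⟩
  rcases hmap a b h1 hne with ⟨h3, h4⟩ | h3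
  · refine Or.inl ?_
    rw [sdiff_adj, fromEdgeSet_adj]
    exact ⟨h3, fun hc => h4 (by simpa using hc.1)⟩
  · exact Or.inr h3

def embA (hk2 : k < m) (z : Fin k) : Fin m := ⟨z.val, by have := z.isLt; omega⟩

def embB (hk2 : k < m) (z : Fin (m - k)) : Fin m := ⟨k + z.val, by have := z.isLt; omega⟩

def clampA (hk1 : 1 ≤ k) (hk2 : k < m) (z : Fin m) : Fin k :=
  if h : z.val < k then ⟨z.val, h⟩ else ⟨0, by omega⟩

def clampB (hk1 : 1 ≤ k) (hk2 : k < m) (z : Fin m) : Fin (m - k) :=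
  if h : k ≤ z.val then ⟨z.val - k, by have := z.isLt; omega⟩ else ⟨m - 1 - k, by omega⟩

def clampE (hk1 : 1 ≤ k) (z : Fin m) : Bool := decide (z.val < k)

variable {A : SimpleGraph (Fin k)} {B : SimpleGraph (Fin (m - k))}

lemma glue_nc (hk1 : 1 ≤ k) (hk2 : k < m) (hA : NC A) (hB : NC B) :
    NC (glue hk1 hk2 A B) := by
  rintro ⟨i, j, kk, l, h1, h2, h3, ha, hb⟩
  rw [Fin.lt_def] at h1 h2 h3
  have hi := i.isLt; have hj := j.isLt; have hkk := kk.isLt; have hl := l.isLt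
  rcases ha with ⟨ha1, ha2, ha⟩ | ⟨ha1, ha2, ha⟩ | ⟨ha1, ha2⟩ | ⟨ha1, ha2⟩ <;>
    rcases hb with ⟨hb1, hb2, hb⟩ | ⟨hb1, hb2, hb⟩ | ⟨hb1, hb2⟩ | ⟨hb1, hb2⟩ <;>
      first
        | omega
        | exact hA ⟨_, _, _, _, Fin.mk_lt_mk.mpr h1, Fin.mk_lt_mk.mpr h2,
            Fin.mk_lt_mk.mpr h3, ha, hb⟩
        | exact hB ⟨_, _, _, _, Fin.mk_lt_mk.mpr (by omega), Fin.mk_lt_mk.mpr (by omega),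
            Fin.mk_lt_mk.mpr (by omega), ha, hb⟩

lemma glue_alt (hk1 : 1 ≤ k) (hk2 : k < m) (hA : Alt A) (hB : Alt B) :
    Alt (glue hk1 hk2 A B) := by
  intro j
  by_cases hj0 : j.val = 0
  · refine Or.inr (fun i hi => ?_)
    have hne := (glue hk1 hk2 A B).ne_of_adj hi
    rw [Fin.lt_def]
    have : j.val ≠ i.val := fun hc => hne (Fin.ext hc)
    omega
  by_cases hjl : j.val = m - 1
  · refine Or.inl (fun i hi => ?_)
    have hne := (glue hk1 hk2 A B).ne_of_adj hi
    rw [Fin.lt_def]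
    have : j.val ≠ i.val := fun hc => hne (Fin.ext hc)
    have := i.isLt
    omega
  by_cases hjk : j.val < k
  · rcases hA ⟨j.val, hjk⟩ with hc | hc
    · refine Or.inl (fun i hi => ?_)
      rcases hi with ⟨h1, h2, h⟩ | ⟨h1, h2, h⟩ | ⟨h1, h2⟩ | ⟨h1, h2⟩
      · have := hc _ h; rw [Fin.lt_def] at this ⊢; exact this
      · omega
      · omega
      · omega
    · refine Or.inr (fun i hi => ?_)
      rcases hi with ⟨h1, h2, h⟩ | ⟨h1, h2, h⟩ | ⟨h1, h2⟩ | ⟨h1, h2⟩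
      · have := hc _ h; rw [Fin.lt_def] at this ⊢; exact this
      · omega
      · omega
      · omega
  · have hjk' : k ≤ j.val := by omega
    have hj2 : j.val - k < m - k := by have := j.isLt; omega
    rcases hB ⟨j.val - k, hj2⟩ with hc | hc
    · refine Or.inl (fun i hi => ?_)
      rcases hi with ⟨h1, h2, h⟩ | ⟨h1, h2, h⟩ | ⟨h1, h2⟩ | ⟨h1, h2⟩
      · omega
      · have := hc _ h; rw [Fin.lt_def] at this ⊢; simp only [Fin.val_mk] at this; omega
      · omega
      · omega
    · refine Or.inr (fun i hi => ?_)
      rcases hi with ⟨h1, h2, h⟩ | ⟨h1, h2, h⟩ | ⟨h1, h2⟩ | ⟨h1, h2⟩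
      · omega
      · have := hc _ h; rw [Fin.lt_def] at this ⊢; simp only [Fin.val_mk] at this; omega
      · omega
      · omega

lemma embA_adj (hk1 : 1 ≤ k) (hk2 : k < m) (a b : Fin k) (h : A.Adj a b) :
    (glue hk1 hk2 A B).Adj (embA hk2 a) (embA hk2 b) :=
  Or.inl ⟨a.isLt, b.isLt, by simpa [embA] using h⟩

lemma embB_adj (hk1 : 1 ≤ k) (hk2 : k < m) (a b : Fin (m - k)) (h : B.Adj a b) :
    (glue hk1 hk2 A B).Adj (embB hk2 a) (embB hk2 b) := by
  refine Or.inr (Or.inl ⟨by simp [embB], by simp [embB], ?_⟩)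
  convert h using 2 <;> simp only [embB, Fin.val_mk] <;> omega

lemma glue_connected (hk1 : 1 ≤ k) (hk2 : k < m) (hA : A.Connected) (hB : B.Connected) :
    (glue hk1 hk2 A B).Connected := by
  rw [connected_iff]
  refine ⟨?_, ⟨⟨0, by omega⟩⟩⟩
  have key : ∀ x : Fin m, (glue hk1 hk2 A B).Reachable ⟨0, by omega⟩ x := by
    intro x
    by_cases hx : x.val < k
    · obtain ⟨w⟩ := hA.preconnected ⟨0, by omega⟩ ⟨x.val, hx⟩
      have h2 := reachable_of_walk (G := A) (H := glue hk1 hk2 A B) (embA hk2)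
        (fun a b h => Or.inl (embA_adj hk1 hk2 a b h)) w
      have e1 : embA hk2 ⟨0, by omega⟩ = (⟨0, by omega⟩ : Fin m) := rfl
      have e2 : embA hk2 ⟨x.val, hx⟩ = x := Fin.ext rfl
      rwa [e1, e2] at h2
    · have h1 : (glue hk1 hk2 A B).Adj ⟨0, by omega⟩ ⟨m - 1, by omega⟩ :=
        Or.inr (Or.inr (Or.inl ⟨rfl, rfl⟩))
      obtain ⟨w⟩ := hB.preconnected ⟨m - 1 - k, by omega⟩ ⟨x.val - k, by have := x.isLt; omega⟩
      have h2 := reachable_of_walk (G := B) (H := glue hk1 hk2 A B) (embB hk2)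
        (fun a b h => Or.inl (embB_adj hk1 hk2 a b h)) w
      have e1 : embB hk2 ⟨m - 1 - k, by omega⟩ = (⟨m - 1, by omega⟩ : Fin m) :=
        Fin.ext (by simp only [embB, Fin.val_mk]; omega)
      have e2 : embB hk2 ⟨x.val - k, by have := x.isLt; omega⟩ = x :=
        Fin.ext (by simp only [embB, Fin.val_mk]; omega)
      rw [e1, e2] at h2
      exact h1.reachable.trans h2
  exact fun a b => (key a).symm.trans (key b)

lemma glue_acyclic (hk1 : 1 ≤ k) (hk2 : k < m) (hA : A.IsTree) (hB : B.IsTree) :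
    (glue hk1 hk2 A B).IsAcyclic := by
  rw [isAcyclic_iff_forall_adj_isBridge]
  intro x y hxy
  rw [isBridge_iff]
  rcases hxy with ⟨hx, hy, hadj⟩ | ⟨hx, hy, hadj⟩ | ⟨h1, h2⟩ | ⟨h1, h2⟩
  · -- A-edge
    refine bridge_transfer (clampA hk1 hk2)
      (show clampA hk1 hk2 x = ⟨x.val, hx⟩ by rw [clampA, dif_pos hx])
      (show clampA hk1 hk2 y = ⟨y.val, hy⟩ by rw [clampA, dif_pos hy]) ?_
      (isBridge_iff.mp (isAcyclic_iff_forall_adj_isBridge.mp hA.IsAcyclic hadj))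
    rintro a b (⟨ha1, ha2, h⟩ | ⟨ha1, ha2, h⟩ | ⟨ha1, ha2⟩ | ⟨ha1, ha2⟩) hne
    · refine Or.inl ⟨by rw [clampA, dif_pos ha1, clampA, dif_pos ha2]; exact h, ?_⟩
      rw [clampA, dif_pos ha1, clampA, dif_pos ha2]
      intro hc
      apply hne
      rw [Sym2.eq_iff] at hc ⊢
      simp only [Fin.mk.injEq] at hc
      rcases hc with ⟨e1, e2⟩ | ⟨e1, e2⟩
      · exact Or.inl ⟨Fin.ext e1, Fin.ext e2⟩
      · exact Or.inr ⟨Fin.ext e1, Fin.ext e2⟩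
    · refine Or.inr ?_
      rw [clampA, dif_neg (by omega), clampA, dif_neg (by omega)]
    · refine Or.inr ?_
      rw [clampA, dif_pos (by omega), clampA, dif_neg (by omega)]
      exact Fin.ext (by simp only [Fin.val_mk]; omega)
    · refine Or.inr ?_
      rw [clampA, dif_neg (by omega), clampA, dif_pos (by omega)]
      exact (Fin.ext (by simp only [Fin.val_mk]; omega)).symm
  · -- B-edge
    refine bridge_transfer (clampB hk1 hk2)
      (show clampB hk1 hk2 x = ⟨x.val - k, by have := x.isLt; omega⟩ by
        rw [clampB, dif_pos hx])
      (show clampB hk1 hk2 y = ⟨y.val - k, by have := y.isLt; omega⟩ by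
        rw [clampB, dif_pos hy]) ?_
      (isBridge_iff.mp (isAcyclic_iff_forall_adj_isBridge.mp hB.IsAcyclic hadj))
    rintro a b (⟨ha1, ha2, h⟩ | ⟨ha1, ha2, h⟩ | ⟨ha1, ha2⟩ | ⟨ha1, ha2⟩) hne
    · refine Or.inr ?_
      rw [clampB, dif_neg (by omega), clampB, dif_neg (by omega)]
    · refine Or.inl ⟨by rw [clampB, dif_pos ha1, clampB, dif_pos ha2]; exact h, ?_⟩
      rw [clampB, dif_pos ha1, clampB, dif_pos ha2]
      intro hc
      apply hne
      rw [Sym2.eq_iff] at hc ⊢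
      simp only [Fin.mk.injEq] at hc
      rcases hc with ⟨e1, e2⟩ | ⟨e1, e2⟩
      · exact Or.inl ⟨Fin.ext (by omega), Fin.ext (by omega)⟩
      · exact Or.inr ⟨Fin.ext (by omega), Fin.ext (by omega)⟩
    · refine Or.inr ?_
      rw [clampB, dif_neg (by omega), clampB, dif_pos (by omega)]
      exact (Fin.ext (by simp only [Fin.val_mk]; omega)).symm
    · refine Or.inr ?_
      rw [clampB, dif_pos (by omega), clampB, dif_neg (by omega)]
      exact Fin.ext (by simp only [Fin.val_mk]; omega)
  · -- e-edge, x.val = 0, y.val = m - 1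
    refine bridge_transfer (G' := (⊥ : SimpleGraph Bool)) (clampE hk1)
      (show clampE (m := m) hk1 x = true by simp [clampE]; omega)
      (show clampE (m := m) hk1 y = false by simp [clampE]; omega) ?_ (fun hr => ?_)
    · rintro a b (⟨ha1, ha2, h⟩ | ⟨ha1, ha2, h⟩ | ⟨ha1, ha2⟩ | ⟨ha1, ha2⟩) hne
      · exact Or.inr (by simp [clampE, ha1, ha2])
      · exact Or.inr (by simp [clampE]; omega)
      · exact absurd (Sym2.eq_iff.mpr (Or.inl ⟨Fin.ext (by omega), Fin.ext (by omega)⟩)) hne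
      · exact absurd (Sym2.eq_iff.mpr (Or.inr ⟨Fin.ext (by omega), Fin.ext (by omega)⟩)) hne
    · rw [bot_sdiff] at hr
      simpa using reachable_bot.mp hr
  · -- e-edge reversed, x.val = m - 1, y.val = 0
    refine bridge_transfer (G' := (⊥ : SimpleGraph Bool)) (clampE hk1)
      (show clampE (m := m) hk1 x = false by simp [clampE]; omega)
      (show clampE (m := m) hk1 y = true by simp [clampE]; omega) ?_ (fun hr => ?_)
    · rintro a b (⟨ha1, ha2, h⟩ | ⟨ha1, ha2, h⟩ | ⟨ha1, ha2⟩ | ⟨ha1, ha2⟩) hne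
      · exact Or.inr (by simp [clampE, ha1, ha2])
      · exact Or.inr (by simp [clampE]; omega)
      · exact absurd (Sym2.eq_iff.mpr (Or.inr ⟨Fin.ext (by omega), Fin.ext (by omega)⟩)) hne
      · exact absurd (Sym2.eq_iff.mpr (Or.inl ⟨Fin.ext (by omega), Fin.ext (by omega)⟩)) hne
    · rw [bot_sdiff] at hr
      simpa using reachable_bot.mp hr

lemma kfin_glue (hk1 : 1 ≤ k) (hk2 : k < m) (hA : A.Connected) :
    kfin (by omega) (glue hk1 hk2 A B) = k := by
  have hm : 2 ≤ m := by omega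
  have hadj : ∀ a b : Fin m, (delE hm (glue hk1 hk2 A B)).Adj a b →
      ((fun z : Fin m => z.val < k) a ↔ (fun z : Fin m => z.val < k) b) := by
    intro a b hab
    rw [delE_adj] at hab
    obtain ⟨hab, hne⟩ := hab
    rcases hab with ⟨h1, h2, _⟩ | ⟨h1, h2, _⟩ | ⟨h1, h2⟩ | ⟨h1, h2⟩
    · exact iff_of_true h1 h2
    · exact iff_of_false (by omega) (by omega)
    · exact absurd (by rw [show a = zv hm from Fin.ext h1, show b = lv hm from Fin.ext h2]) hne
    · exact absurd (by rw [show a = lv hm from Fin.ext h1, show b = zv hm from Fin.ext h2,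
        Sym2.eq_swap]) hne
  have hchar : ∀ x : Fin m, (delE hm (glue hk1 hk2 A B)).Reachable (zv hm) x ↔ x.val < k := by
    intro x
    constructor
    · rintro ⟨w⟩
      exact (walk_prop_iff (fun z : Fin m => z.val < k) hadj w).mp (by simp [zv]; omega)
    · intro hx
      obtain ⟨w⟩ := hA.preconnected ⟨0, by omega⟩ ⟨x.val, hx⟩
      have h2 := reachable_of_walk (G := A) (H := delE hm (glue hk1 hk2 A B)) (embA hk2)
        (fun a b h => Or.inl (by
          rw [delE_adj]
          refine ⟨embA_adj hk1 hk2 a b h, fun hc => ?_⟩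
          rw [Sym2.eq_iff] at hc
          rcases hc with ⟨e1, e2⟩ | ⟨e1, e2⟩
          · have := congrArg Fin.val e2
            simp only [embA, Fin.val_mk, lv] at this
            have := b.isLt; omega
          · have := congrArg Fin.val e1
            simp only [embA, Fin.val_mk, lv] at this
            have := a.isLt; omega)) w
      have e1 : embA (k := k) hk2 ⟨0, by omega⟩ = zv hm := rfl
      have e2 : embA (k := k) hk2 ⟨x.val, hx⟩ = x := Fin.ext rfl
      rwa [e1, e2] at h2
  rw [kfin, Nat.card_congr (Equiv.subtypeEquivRight hchar)]
  have e : {x : Fin m // x.val < k} ≃ Fin k :=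
    ⟨fun x => ⟨x.1.val, x.2⟩, fun u => ⟨⟨u.val, by omega⟩, u.isLt⟩,
     fun x => Subtype.ext (Fin.ext rfl), fun u => rfl⟩
  rw [Nat.card_congr e, Nat.card_eq_fintype_card, Fintype.card_fin]

end Glue
section Split
variable {m : ℕ} {T : SimpleGraph (Fin m)}

lemma splitA_nc {k : ℕ} (hk2 : k < m) (hnc : NC T) : NC (splitA hk2 T) := by
  rintro ⟨i, j, kk, l, h1, h2, h3, ha, hb⟩
  rw [Fin.lt_def] at h1 h2 h3
  exact hnc ⟨_, _, _, _, Fin.mk_lt_mk.mpr h1, Fin.mk_lt_mk.mpr h2, Fin.mk_lt_mk.mpr h3, ha, hb⟩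

lemma splitB_nc {k : ℕ} (hk2 : k < m) (hnc : NC T) : NC (splitB hk2 T) := by
  rintro ⟨i, j, kk, l, h1, h2, h3, ha, hb⟩
  rw [Fin.lt_def] at h1 h2 h3
  exact hnc ⟨_, _, _, _, Fin.mk_lt_mk.mpr (by omega), Fin.mk_lt_mk.mpr (by omega),
    Fin.mk_lt_mk.mpr (by omega), ha, hb⟩

lemma splitA_alt {k : ℕ} (hk2 : k < m) (halt : Alt T) : Alt (splitA hk2 T) := by
  intro j
  rcases halt ⟨j.val, by have := j.isLt; omega⟩ with hc | hc
  · refine Or.inl (fun i hi => ?_)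
    have := hc _ hi
    rw [Fin.lt_def] at this ⊢
    exact this
  · refine Or.inr (fun i hi => ?_)
    have := hc _ hi
    rw [Fin.lt_def] at this ⊢
    exact this

lemma splitB_alt {k : ℕ} (hk2 : k < m) (halt : Alt T) : Alt (splitB hk2 T) := by
  intro j
  rcases halt ⟨k + j.val, by have := j.isLt; omega⟩ with hc | hc
  · refine Or.inl (fun i hi => ?_)
    have := hc _ hi
    rw [Fin.lt_def] at this ⊢
    simp only [Fin.val_mk] at this
    omega
  · refine Or.inr (fun i hi => ?_)
    have := hc _ hi
    rw [Fin.lt_def] at this ⊢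
    simp only [Fin.val_mk] at this
    omega

lemma splitA_acyclic {k : ℕ} (hk2 : k < m) (ht : T.IsAcyclic) : (splitA hk2 T).IsAcyclic :=
  isAcyclic_comap ht _ (fun a b h => by
    simp only [Fin.mk.injEq] at h
    exact Fin.ext h)

lemma splitB_acyclic {k : ℕ} (hk2 : k < m) (ht : T.IsAcyclic) : (splitB hk2 T).IsAcyclic :=
  isAcyclic_comap ht _ (fun a b h => by
    simp only [Fin.mk.injEq] at h
    exact Fin.ext (by omega))

lemma reach_lv_iff (hm : 2 ≤ m) (htree : T.IsTree) (hnc : NC T) (halt : Alt T) (x : Fin m) :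
    (delE hm T).Reachable (lv hm) x ↔ kfin hm T ≤ x.val := by
  constructor
  · intro h
    by_contra hc
    exact side_disj hm htree hnc halt
      ((reach_iff_lt_kfin hm htree hnc halt x).mpr (by omega)) h
  · intro h
    rcases reach_dichotomy hm htree.isConnected x with h1 | h1
    · have := (reach_iff_lt_kfin hm htree hnc halt x).mp h1
      omega
    · exact h1

lemma walk_inA (hm : 2 ≤ m) (htree : T.IsTree) (hnc : NC T) (halt : Alt T)
    (hk2 : kfin hm T < m) :
    ∀ {p q : Fin m} (_ : (delE hm T).Walk p q) (hp : p.val < kfin hm T)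
      (hq : q.val < kfin hm T),
      (splitA hk2 T).Reachable ⟨p.val, hp⟩ ⟨q.val, hq⟩ := by
  intro p q w
  induction w with
  | nil => intro hp hq; exact Reachable.refl _
  | @cons p r q h w ih =>
    intro hp hq
    have hr : r.val < kfin hm T :=
      (reach_iff_lt_kfin hm htree hnc halt r).mp
        (((reach_iff_lt_kfin hm htree hnc halt p).mpr hp).trans h.reachable)
    have hadj : (splitA hk2 T).Adj ⟨p.val, hp⟩ ⟨r.val, hr⟩ := (delE_adj.mp h).1
    exact hadj.reachable.trans (ih hr hq)

lemma walk_inB (hm : 2 ≤ m) (htree : T.IsTree) (hnc : NC T) (halt : Alt T)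
    (hk2 : kfin hm T < m) :
    ∀ {p q : Fin m} (_ : (delE hm T).Walk p q) (hp : kfin hm T ≤ p.val)
      (hq : kfin hm T ≤ q.val),
      (splitB hk2 T).Reachable ⟨p.val - kfin hm T, by have := p.isLt; omega⟩
        ⟨q.val - kfin hm T, by have := q.isLt; omega⟩ := by
  intro p q w
  induction w with
  | nil => intro hp hq; exact Reachable.refl _
  | @cons p r q h w ih =>
    intro hp hq
    have hr : kfin hm T ≤ r.val :=
      (reach_lv_iff hm htree hnc halt r).mp
        (((reach_lv_iff hm htree hnc halt p).mpr hp).trans h.reachable)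
    have hadj : (splitB hk2 T).Adj ⟨p.val - kfin hm T, by have := p.isLt; omega⟩
        ⟨r.val - kfin hm T, by have := r.isLt; omega⟩ := by
      rw [splitB_adj]
      have e1 : (⟨kfin hm T + (p.val - kfin hm T), by have := p.isLt; omega⟩ : Fin m) = p :=
        Fin.ext (by simp only [Fin.val_mk]; omega)
      have e2 : (⟨kfin hm T + (r.val - kfin hm T), by have := r.isLt; omega⟩ : Fin m) = r :=
        Fin.ext (by simp only [Fin.val_mk]; omega)
      rw [e1, e2]
      exact (delE_adj.mp h).1
    exact hadj.reachable.trans (ih hr hq)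

lemma splitA_connected (hm : 2 ≤ m) (htree : T.IsTree) (hnc : NC T) (halt : Alt T)
    (hk2 : kfin hm T < m) : (splitA hk2 T).Connected := by
  have hk1 : 1 ≤ kfin hm T := one_le_kfin hm htree hnc halt
  rw [connected_iff]
  refine ⟨?_, ⟨⟨0, by omega⟩⟩⟩
  have key : ∀ u : Fin (kfin hm T), (splitA hk2 T).Reachable ⟨0, by omega⟩ u := by
    intro u
    obtain ⟨w⟩ := (reach_iff_lt_kfin hm htree hnc halt
      ⟨u.val, by have := u.isLt; omega⟩).mpr (by simpa using u.isLt)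
    exact walk_inA hm htree hnc halt hk2 w (by simp [zv]; omega) (by simpa using u.isLt)
  exact fun a b => (key a).symm.trans (key b)

lemma splitB_connected (hm : 2 ≤ m) (htree : T.IsTree) (hnc : NC T) (halt : Alt T)
    (hk2 : kfin hm T < m) : (splitB hk2 T).Connected := by
  have hk1 : 1 ≤ kfin hm T := one_le_kfin hm htree hnc halt
  have hkle : kfin hm T ≤ m - 1 := kfin_le hm htree hnc halt
  rw [connected_iff]
  refine ⟨?_, ⟨⟨m - 1 - kfin hm T, by omega⟩⟩⟩
  have key : ∀ u : Fin (m - kfin hm T),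
      (splitB hk2 T).Reachable ⟨m - 1 - kfin hm T, by omega⟩ u := by
    intro u
    obtain ⟨w⟩ := (reach_lv_iff hm htree hnc halt
      ⟨kfin hm T + u.val, by have := u.isLt; omega⟩).mpr (by simp)
    have h2 := walk_inB hm htree hnc halt hk2 w (by simp [lv]; omega) (by simp)
    have e1 : (⟨(lv hm).val - kfin hm T, by have := (lv hm).isLt; omega⟩ :
        Fin (m - kfin hm T)) = ⟨m - 1 - kfin hm T, by omega⟩ := Fin.ext rfl
    have e2 : (⟨(⟨kfin hm T + u.val, by have := u.isLt; omega⟩ : Fin m).val - kfin hm T,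
        by have := u.isLt; omega⟩ : Fin (m - kfin hm T)) = u :=
      Fin.ext (by simp only [Fin.val_mk]; omega)
    rw [e1, e2] at h2
    exact h2
  exact fun a b => (key a).symm.trans (key b)

lemma glue_split (hm : 2 ≤ m) (htree : T.IsTree) (hnc : NC T) (halt : Alt T)
    (hk1 : 1 ≤ kfin hm T) (hk2 : kfin hm T < m) :
    glue hk1 hk2 (splitA hk2 T) (splitB hk2 T) = T := by
  ext x y
  constructor
  · rintro (⟨hx, hy, h⟩ | ⟨hx, hy, h⟩ | ⟨h1, h2⟩ | ⟨h1, h2⟩)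
    · exact h
    · rw [splitB_adj] at h
      have e1 : (⟨kfin hm T + (x.val - kfin hm T), by have := x.isLt; omega⟩ : Fin m) = x :=
        Fin.ext (by simp only [Fin.val_mk]; omega)
      have e2 : (⟨kfin hm T + (y.val - kfin hm T), by have := y.isLt; omega⟩ : Fin m) = y :=
        Fin.ext (by simp only [Fin.val_mk]; omega)
      rwa [e1, e2] at h
    · rw [show x = zv hm from Fin.ext h1, show y = lv hm from Fin.ext h2]
      exact adj_zero_last hm htree hnc halt
    · rw [show x = lv hm from Fin.ext h1, show y = zv hm from Fin.ext h2]
      exact (adj_zero_last hm htree hnc halt).symm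
  · intro h
    rcases edge_split hm htree hnc halt h with ⟨hx, hy⟩ | ⟨hx, hy⟩ | he
    · exact Or.inl ⟨hx, hy, h⟩
    · refine Or.inr (Or.inl ⟨hx, hy, ?_⟩)
      rw [splitB_adj]
      have e1 : (⟨kfin hm T + (x.val - kfin hm T), by have := x.isLt; omega⟩ : Fin m) = x :=
        Fin.ext (by simp only [Fin.val_mk]; omega)
      have e2 : (⟨kfin hm T + (y.val - kfin hm T), by have := y.isLt; omega⟩ : Fin m) = y :=
        Fin.ext (by simp only [Fin.val_mk]; omega)
      rw [e1, e2]
      exact h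
    · rw [Sym2.eq_iff] at he
      rcases he with ⟨e1, e2⟩ | ⟨e1, e2⟩
      · exact Or.inr (Or.inr (Or.inl ⟨congrArg Fin.val e1, congrArg Fin.val e2⟩))
      · exact Or.inr (Or.inr (Or.inr ⟨congrArg Fin.val e1, congrArg Fin.val e2⟩))

end Split

section Count

def Cond {m : ℕ} (T : SimpleGraph (Fin m)) : Prop := T.IsTree ∧ NC T ∧ Alt T

abbrev NCA (m : ℕ) : Type := {T : SimpleGraph (Fin m) // Cond T}

noncomputable def pieceEquiv {m : ℕ} (hm : 2 ≤ m) (k : ℕ) (hk1 : 1 ≤ k) (hk2 : k < m) :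
    {TT : NCA m // kfin hm TT.1 = k} ≃ NCA k × NCA (m - k) where
  toFun TT :=
    (⟨splitA hk2 TT.1.1, by
      obtain ⟨⟨T, hT⟩, hk⟩ := TT
      subst hk
      exact ⟨⟨splitA_connected hm hT.1 hT.2.1 hT.2.2 hk2,
        splitA_acyclic hk2 hT.1.IsAcyclic⟩,
        splitA_nc hk2 hT.2.1, splitA_alt hk2 hT.2.2⟩⟩,
     ⟨splitB hk2 TT.1.1, by
      obtain ⟨⟨T, hT⟩, hk⟩ := TT
      subst hk
      exact ⟨⟨splitB_connected hm hT.1 hT.2.1 hT.2.2 hk2,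
        splitB_acyclic hk2 hT.1.IsAcyclic⟩,
        splitB_nc hk2 hT.2.1, splitB_alt hk2 hT.2.2⟩⟩)
  invFun P :=
    ⟨⟨glue hk1 hk2 P.1.1 P.2.1,
      ⟨⟨glue_connected hk1 hk2 P.1.2.1.isConnected P.2.2.1.isConnected,
        glue_acyclic hk1 hk2 P.1.2.1 P.2.2.1⟩,
       glue_nc hk1 hk2 P.1.2.2.1 P.2.2.2.1,
       glue_alt hk1 hk2 P.1.2.2.2 P.2.2.2.2⟩⟩,
     kfin_glue hk1 hk2 P.1.2.1.isConnected⟩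
  left_inv := by
    rintro ⟨⟨T, hT⟩, hk⟩
    subst hk
    exact Subtype.ext (Subtype.ext (glue_split hm hT.1 hT.2.1 hT.2.2 hk1 hk2))
  right_inv := by
    rintro ⟨⟨A, hA⟩, ⟨B, hB⟩⟩
    refine Prod.ext ?_ ?_
    · exact Subtype.ext (splitA_glue hk1 hk2 A B)
    · exact Subtype.ext (splitB_glue hk1 hk2 A B)

lemma card_one : Nat.card (NCA 1) = 1 := by
  rw [Nat.card_eq_one_iff_unique]
  constructor
  · constructor
    rintro ⟨T1, _⟩ ⟨T2, _⟩
    refine Subtype.ext ?_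
    ext x y
    rw [Subsingleton.elim x y]
    exact iff_of_false (T1.irrefl) (T2.irrefl)
  · refine ⟨⟨⊥, ?tree, ?nc, ?alt⟩⟩
    case tree =>
      constructor
      · rw [connected_iff]
        exact ⟨fun a b => by rw [Subsingleton.elim a b], ⟨0⟩⟩
      · exact isAcyclic_bot
    case nc =>
      rintro ⟨i, j, kk, l, _, _, _, h, _⟩
      exact h.elim
    case alt =>
      exact fun j => Or.inl (fun i hi => absurd hi (by simp))

lemma card_step {m : ℕ} (hm : 2 ≤ m) :
    Nat.card (NCA m) = ∑ j ∈ Finset.Ico 1 m, Nat.card (NCA j) * Nat.card (NCA (m - j)) := by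
  classical
  have hfin : Finite (NCA m) := by unfold NCA; infer_instance
  have : Fintype (NCA m) := Fintype.ofFinite _
  rw [Nat.card_eq_fintype_card, ← Finset.card_univ]
  rw [Finset.card_eq_sum_card_fiberwise (f := fun TT : NCA m => kfin hm TT.1)
    (t := Finset.Ico 1 m) (fun TT _ => by
      rw [Finset.mem_coe, Finset.mem_Ico]
      show 1 ≤ kfin hm TT.1 ∧ kfin hm TT.1 < m
      have h1 := one_le_kfin hm TT.2.1 TT.2.2.1 TT.2.2.2
      have h2 := kfin_le hm TT.2.1 TT.2.2.1 TT.2.2.2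
      omega)]
  refine Finset.sum_congr rfl (fun j hj => ?_)
  rw [Finset.mem_Ico] at hj
  rw [← Fintype.card_subtype, ← Nat.card_eq_fintype_card,
    Nat.card_congr (pieceEquiv hm j hj.1 hj.2), Nat.card_prod]

lemma card_catalan : ∀ n : ℕ, Nat.card (NCA (n + 1)) = catalan n := by
  intro n
  induction n using Nat.strong_induction_on with
  | _ n ih =>
    match n, ih with
    | 0, _ => simpa using card_one
    | Nat.succ n', ih =>
      rw [card_step (m := n' + 2) (by omega)]
      rw [Finset.sum_Ico_eq_sum_range]
      have hs : ∀ i ∈ Finset.range (n' + 2 - 1),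
          Nat.card (NCA (1 + i)) * Nat.card (NCA (n' + 2 - (1 + i))) =
            catalan i * catalan (n' - i) := by
        intro i hi
        rw [Finset.mem_range] at hi
        rw [show n' + 2 - (1 + i) = (n' - i) + 1 by omega, show 1 + i = i + 1 by omega]
        rw [ih i (by omega), ih (n' - i) (by omega)]
      rw [Finset.sum_congr rfl hs]
      rw [catalan_succ]
      rw [show n' + 2 - 1 = n' + 1 by omega]
      rw [Finset.sum_range]

end Count

end NCAT


/-- For `n ≥ 1`, the number of trees on the ordered vertex set
`{1, …, n+1}` (modelled as `Fin (n+1)`) that are non-crossing (no edges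
`{i,k}` and `{j,l}` with `i < j < k < l`) and alternating (no vertex has both
a smaller and a larger neighbor) equals the `n`-th Catalan number. -/
theorem noncrossing_alternating_trees_card (n : ℕ) (hn : 1 ≤ n) :
    Nat.card {T : SimpleGraph (Fin (n + 1)) //
      T.IsTree ∧
      (¬ ∃ i j k l : Fin (n + 1), i < j ∧ j < k ∧ k < l ∧ T.Adj i k ∧ T.Adj j l) ∧
      (∀ j : Fin (n + 1), (∀ i, T.Adj j i → i < j) ∨ (∀ i, T.Adj j i → j < i))} =
    catalan n := NCAT.card_catalan n
end
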